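/- arXiv:2403.04752 — 4 statements merged into one kernel-verified Lean document; each statement's English description precedes it below -/
import Mathlib

section
/- Suppose there exists γ* ∈ ℝ₊^m with A(1,γ*) ≻ 0. Then Γ equals the closed conic hull of the set {(1,γ) : γ ∈ Γ₁}, where Γ₁ := {γ ∈ ℝ₊^m : A(1,γ) ⪰ 0}. -/
noncomputable section
open Matrix Set

/-- Dot-product style inner product on `ℝ × (Fin m → ℝ)` (i.e. `ℝ^{1+m}`). -/
def ipr {m : ℕ} (v w : ℝ × (Fin m → ℝ)) : ℝ := v.1 * w.1 + v.2 ⬝ᵥ w.2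

/-- `A(γ₀, γ) = γ₀ A₀ + ∑ i, γ i • A i`. -/
def Amix {ι : Type*} [Fintype ι] {m : ℕ} (A0 : Matrix ι ι ℝ)
    (A : Fin m → Matrix ι ι ℝ) (g0 : ℝ) (g : Fin m → ℝ) : Matrix ι ι ℝ :=
  g0 • A0 + ∑ i, g i • A i

/-- `b(γ) = b₀ + ∑ i, γ i • b i` (the `γ₀ = 1` slice). -/
def bmix {ι : Type*} {m : ℕ} (b0 : ι → ℝ) (b : Fin m → ι → ℝ) (g : Fin m → ℝ) : ι → ℝ :=
  b0 + ∑ i, g i • b i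

/-- The cone of convex Lagrange multipliers `Γ`. -/
def Gamma {ι : Type*} [Fintype ι] {m : ℕ} (A0 : Matrix ι ι ℝ)
    (A : Fin m → Matrix ι ι ℝ) : Set (ℝ × (Fin m → ℝ)) :=
  {p | 0 ≤ p.1 ∧ (∀ i, 0 ≤ p.2 i) ∧ (Amix A0 A p.1 p.2).PosSemidef}

/-- The slice `Γ₁` of `Γ` at `γ₀ = 1`. -/
def Gamma1 {ι : Type*} [Fintype ι] {m : ℕ} (A0 : Matrix ι ι ℝ)
    (A : Fin m → Matrix ι ι ℝ) : Set (Fin m → ℝ) :=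
  {g | (∀ i, 0 ≤ g i) ∧ (Amix A0 A 1 g).PosSemidef}

/-- Polar cone with respect to `ipr`. -/
def polarCone {m : ℕ} (S : Set (ℝ × (Fin m → ℝ))) : Set (ℝ × (Fin m → ℝ)) :=
  {v | ∀ w ∈ S, ipr v w ≤ 0}

/-- The quadratic function `x ↦ xᵀ M x + 2 bᵀ x + c`. -/
def quadF {ι : Type*} [Fintype ι] (M : Matrix ι ι ℝ) (b : ι → ℝ) (c : ℝ) (x : ι → ℝ) : ℝ :=
  x ⬝ᵥ M.mulVec x + 2 * (b ⬝ᵥ x) + c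

/-- The vector `q(x) = (q₀(x), q₁(x), …, q_m(x)) ∈ ℝ^{1+m}`. -/
def qVec {ι : Type*} [Fintype ι] {m : ℕ} (A0 : Matrix ι ι ℝ) (b0 : ι → ℝ) (c0 : ℝ)
    (A : Fin m → Matrix ι ι ℝ) (b : Fin m → ι → ℝ) (c : Fin m → ℝ)
    (x : ι → ℝ) : ℝ × (Fin m → ℝ) :=
  (quadF A0 b0 c0 x, fun i => quadF (A i) (b i) (c i) x)

/-- The first unit vector `e₀ ∈ ℝ^{1+m}`. -/
def e0 {m : ℕ} : ℝ × (Fin m → ℝ) := (1, 0)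

/-- `[γ, q(x)] = q₀(x) + ∑ i, γ i * q i (x)`. -/
def brkt {ι : Type*} [Fintype ι] {m : ℕ} (A0 : Matrix ι ι ℝ) (b0 : ι → ℝ) (c0 : ℝ)
    (A : Fin m → Matrix ι ι ℝ) (b : Fin m → ι → ℝ) (c : Fin m → ℝ)
    (g : Fin m → ℝ) (x : ι → ℝ) : ℝ :=
  quadF A0 b0 c0 x + ∑ i, g i * quadF (A i) (b i) (c i) x

/-- The projected SDP relaxation `S_SDP = {(x,t) : q(x) - 2t e₀ ∈ Γ°}`. -/
def SSDP {ι : Type*} [Fintype ι] {m : ℕ} (A0 : Matrix ι ι ℝ) (b0 : ι → ℝ) (c0 : ℝ)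
    (A : Fin m → Matrix ι ι ℝ) (b : Fin m → ι → ℝ) (c : Fin m → ℝ) :
    Set ((ι → ℝ) × ℝ) :=
  {p | qVec A0 b0 c0 A b c p.1 - (2 * p.2) • e0 ∈ polarCone (Gamma A0 A)}

/-- The QCQP epigraph `S = {(x,t) : q₀(x) ≤ 2t, q i (x) ≤ 0 ∀ i}`. -/
def Sepi {ι : Type*} [Fintype ι] {m : ℕ} (A0 : Matrix ι ι ℝ) (b0 : ι → ℝ) (c0 : ℝ)
    (A : Fin m → Matrix ι ι ℝ) (b : Fin m → ι → ℝ) (c : Fin m → ℝ) :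
    Set ((ι → ℝ) × ℝ) :=
  {p | quadF A0 b0 c0 p.1 ≤ 2 * p.2 ∧ ∀ i, quadF (A i) (b i) (c i) p.1 ≤ 0}

/-- `F` is a face of the convex cone `K`. -/
def IsFaceOf {E : Type*} [Add E] (K F : Set E) : Prop :=
  F ⊆ K ∧ ∀ y ∈ K, ∀ z ∈ K, y + z ∈ F → y ∈ F ∧ z ∈ F

/-- `G` is the minimal face of `K` containing `v`. -/
def IsMinFace {E : Type*} [Add E] (K : Set E) (v : E) (G : Set E) : Prop :=
  IsFaceOf K G ∧ v ∈ G ∧ ∀ G', IsFaceOf K G' → v ∈ G' → G ⊆ G'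

/-- The set of rounding directions `R(x,t)` at a point `p` of a convex set `C`. -/
def Rset {E : Type*} [AddCommGroup E] [Module ℝ E] (C : Set E) (p : E) : Set E :=
  {d | ∃ ε : ℝ, 0 < ε ∧ ∀ s ∈ Set.Icc (-ε) ε, p + s • d ∈ C}

/-- The first-order rounding directions `R'(x,t)`, relative to a face `G` of `Γ°`. -/
def Rset' {ι : Type*} [Fintype ι] {m : ℕ} (A0 : Matrix ι ι ℝ) (b0 : ι → ℝ) (c0 : ℝ)
    (A : Fin m → Matrix ι ι ℝ) (b : Fin m → ι → ℝ) (c : Fin m → ℝ)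
    (x : ι → ℝ) (t : ℝ) (G : Set (ℝ × (Fin m → ℝ))) : Set ((ι → ℝ) × ℝ) :=
  {d | ∀ α : ℝ,
    qVec A0 b0 c0 A b c (x + α • d.1) - (2 * (t + α * d.2)) • e0 ∈ Submodule.span ℝ G}

/-- Orthogonal complement (as a set) of a subset of `ℝ^{1+m}` w.r.t. `ipr`. -/
def orthC {m : ℕ} (G : Set (ℝ × (Fin m → ℝ))) : Set (ℝ × (Fin m → ℝ)) :=
  {v | ∀ w ∈ G, ipr v w = 0}

/-! `Γ` is a closed convex cone whose points with `γ₀ > 0` are exactly the positive multiples of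
the points `(1, γ)`, `γ ∈ Γ₁`. Adding `ε • (1, γ*)` to a point of `Γ` lands in that part, and
tends to the point as `ε → 0⁺`. -/

section
variable {ι : Type*} [Fintype ι] {m : ℕ} (A0 : Matrix ι ι ℝ) (A : Fin m → Matrix ι ι ℝ)

open scoped ComplexOrder in
lemma Matrix.isClosed_setOf_posSemidef {𝕜 : Type*} [RCLike 𝕜] :
    IsClosed {M : Matrix ι ι 𝕜 | M.PosSemidef} := by
  simp only [posSemidef_iff_dotProduct_mulVec, ofPred_and, ofPred_forall]
  exact (isClosed_eq continuous_id.matrix_conjTranspose continuous_id).inter <|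
    isClosed_iInter fun x => isClosed_le continuous_const (by fun_prop)

lemma Amix_add (a b : ℝ) (g h : Fin m → ℝ) :
    Amix A0 A (a + b) (g + h) = Amix A0 A a g + Amix A0 A b h := by
  simp only [Amix, add_smul, Pi.add_apply, Finset.sum_add_distrib]
  abel

lemma Amix_smul (c a : ℝ) (g : Fin m → ℝ) :
    Amix A0 A (c * a) (c • g) = c • Amix A0 A a g := by
  simp only [Amix, smul_add, Finset.smul_sum, Pi.smul_apply, smul_eq_mul, mul_smul]

lemma continuous_Amix : Continuous fun p : ℝ × (Fin m → ℝ) => Amix A0 A p.1 p.2 := by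
  unfold Amix; fun_prop

lemma isClosed_Gamma : IsClosed (Gamma A0 A) := by
  simp only [Gamma, ofPred_and, ofPred_forall]
  exact (isClosed_le continuous_const continuous_fst).inter <|
    (isClosed_iInter fun i => isClosed_le continuous_const (by fun_prop)).inter <|
    isClosed_setOf_posSemidef.preimage (continuous_Amix A0 A)

lemma add_mem_Gamma {p q : ℝ × (Fin m → ℝ)} (hp : p ∈ Gamma A0 A) (hq : q ∈ Gamma A0 A) :
    p + q ∈ Gamma A0 A :=
  ⟨add_nonneg hp.1 hq.1, fun i => add_nonneg (hp.2.1 i) (hq.2.1 i), by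
    simpa only [Prod.fst_add, Prod.snd_add, Amix_add] using hp.2.2.add hq.2.2⟩

lemma smul_mem_Gamma {c : ℝ} (hc : 0 ≤ c) {p : ℝ × (Fin m → ℝ)} (hp : p ∈ Gamma A0 A) :
    c • p ∈ Gamma A0 A :=
  ⟨mul_nonneg hc hp.1, fun i => mul_nonneg hc (hp.2.1 i), by
    simpa only [Prod.smul_fst, Prod.smul_snd, smul_eq_mul, Amix_smul] using hp.2.2.smul hc⟩

lemma mk_one_mem_Gamma_iff {g : Fin m → ℝ} : ((1 : ℝ), g) ∈ Gamma A0 A ↔ g ∈ Gamma1 A0 A := by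
  simp [Gamma, Gamma1]

lemma exists_mem_Gamma1_of_mem_Gamma {p : ℝ × (Fin m → ℝ)} (hp : p ∈ Gamma A0 A)
    (hp₁ : 0 < p.1) : ∃ g ∈ Gamma1 A0 A, p = p.1 • ((1 : ℝ), g) := by
  refine ⟨p.1⁻¹ • p.2, ?_, ?_⟩
  · rw [← mk_one_mem_Gamma_iff, ← inv_mul_cancel₀ hp₁.ne']
    exact smul_mem_Gamma A0 A (inv_nonneg.2 hp₁.le) hp
  · ext <;> simp [smul_smul, mul_inv_cancel₀ hp₁.ne']

end

theorem stmt2_general {n m : ℕ} (A0 : Matrix (Fin n) (Fin n) ℝ)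
    (A : Fin m → Matrix (Fin n) (Fin n) ℝ)
    (h : ∃ g : Fin m → ℝ, (∀ i, 0 ≤ g i) ∧ (Amix A0 A 1 g).PosDef) :
    Gamma A0 A =
      closure {p : ℝ × (Fin m → ℝ) |
        ∃ l : ℝ, 0 ≤ l ∧ ∃ g ∈ Gamma1 A0 A, p = l • ((1 : ℝ), g)} := by
  obtain ⟨g, hg, hgA⟩ := h
  have hg₁ : ((1 : ℝ), g) ∈ Gamma A0 A := ⟨zero_le_one, hg, hgA.posSemidef⟩
  apply Subset.antisymm
  · intro p hp
    have hperturb : Filter.Tendsto (fun ε : ℝ => p + ε • ((1 : ℝ), g))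
        (nhdsWithin 0 (Ioi 0)) (nhds p) := by
      have hcont : Continuous fun ε : ℝ => p + ε • ((1 : ℝ), g) := by fun_prop
      exact (hcont.tendsto' 0 p (by simp)).mono_left nhdsWithin_le_nhds
    refine mem_closure_of_tendsto hperturb (eventually_mem_nhdsWithin.mono fun ε (hε : 0 < ε) => ?_)
    have hmem := add_mem_Gamma A0 A hp (smul_mem_Gamma A0 A hε.le hg₁)
    have hpos : 0 < (p + ε • ((1 : ℝ), g)).1 := by simpa using add_pos_of_nonneg_of_pos hp.1 hε
    exact ⟨_, hpos.le, exists_mem_Gamma1_of_mem_Gamma A0 A hmem hpos⟩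
  · refine closure_minimal ?_ (isClosed_Gamma A0 A)
    rintro _ ⟨l, hl, g, hg, rfl⟩
    exact smul_mem_Gamma A0 A hl ((mk_one_mem_Gamma_iff A0 A).2 hg)

/-- under dual strict feasibility, `Γ` is the closed conic hull of
`{(1,γ) : γ ∈ Γ₁}`. -/
theorem stmt2 {n m : ℕ} (A0 : Matrix (Fin n) (Fin n) ℝ)
    (A : Fin m → Matrix (Fin n) (Fin n) ℝ)
    (hA0 : A0.IsSymm) (hA : ∀ i, (A i).IsSymm)
    (h : ∃ g : Fin m → ℝ, (∀ i, 0 ≤ g i) ∧ (Amix A0 A 1 g).PosDef) :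
    Gamma A0 A =
      closure {p : ℝ × (Fin m → ℝ) |
        ∃ l : ℝ, 0 ≤ l ∧ ∃ g ∈ Gamma1 A0 A, p = l • ((1 : ℝ), g)} :=
  stmt2_general A0 A h
end
end

section
/- Let (x,t) ∈ S_SDP and let G(x,t) be the minimal face of Γ° containing q(x) − 2te₀. Define R'(x,t) := {(x',t') : q(x + αx') − 2(t + αt')e₀ ∈ span(G(x,t)) for all α ∈ ℝ}. Then R'(x,t) ⊆ R(x,t), i.e., for any (x',t') ∈ R'(x,t) there exists ε > 0 such that (x,t) + s(x',t') ∈ S_SDP for all s ∈ [−ε,ε]. -/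
noncomputable section
open Matrix Set

lemma ipr_add_left {m : ℕ} (v w γ : ℝ × (Fin m → ℝ)) :
    ipr (v + w) γ = ipr v γ + ipr w γ := by
  simp [ipr, add_dotProduct]; ring

lemma ipr_smul_left {m : ℕ} (c : ℝ) (v γ : ℝ × (Fin m → ℝ)) :
    ipr (c • v) γ = c * ipr v γ := by
  simp [ipr, smul_dotProduct, smul_eq_mul]; ring

lemma polar_add {m : ℕ} {S : Set (ℝ × (Fin m → ℝ))} {v w : ℝ × (Fin m → ℝ)}
    (hv : v ∈ polarCone S) (hw : w ∈ polarCone S) : v + w ∈ polarCone S := by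
  intro γ hγ
  rw [ipr_add_left]
  linarith [hv γ hγ, hw γ hγ]

lemma polar_smul {m : ℕ} {S : Set (ℝ × (Fin m → ℝ))} {c : ℝ} {v : ℝ × (Fin m → ℝ)}
    (hc : 0 ≤ c) (hv : v ∈ polarCone S) : c • v ∈ polarCone S := by
  intro γ hγ
  rw [ipr_smul_left]
  exact mul_nonpos_of_nonneg_of_nonpos hc (hv γ hγ)

lemma face_sub {m : ℕ} {K : Set (ℝ × (Fin m → ℝ))}
    (hadd : ∀ {a b : ℝ × (Fin m → ℝ)}, a ∈ K → b ∈ K → a + b ∈ K)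
    (hsmul : ∀ {c : ℝ} {a : ℝ × (Fin m → ℝ)}, 0 ≤ c → a ∈ K → c • a ∈ K)
    {v : ℝ × (Fin m → ℝ)} (hvK : v ∈ K) {G : Set (ℝ × (Fin m → ℝ))}
    (hG : IsMinFace K v G) :
    ∀ g ∈ G, ∃ ε > (0:ℝ), v - ε • g ∈ K := by
  set F : Set (ℝ × (Fin m → ℝ)) := {y | y ∈ K ∧ ∃ ε > (0:ℝ), v - ε • y ∈ K} with hF
  have hface : IsFaceOf K F := by
    constructor
    · intro y hy; exact hy.1
    · intro y hy z hz hyz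
      obtain ⟨_, ε, hε, hKε⟩ := hyz
      constructor
      · refine ⟨hy, ε, hε, ?_⟩
        have h1 : v - ε • y = (v - ε • (y + z)) + ε • z := by module
        rw [h1]; exact hadd hKε (hsmul hε.le hz)
      · refine ⟨hz, ε, hε, ?_⟩
        have h1 : v - ε • z = (v - ε • (y + z)) + ε • y := by module
        rw [h1]; exact hadd hKε (hsmul hε.le hy)
  have hvF : v ∈ F := by
    refine ⟨hvK, 1/2, by norm_num, ?_⟩
    have h1 : v - (1/2 : ℝ) • v = (1/2 : ℝ) • v := by module
    rw [h1]; exact hsmul (by norm_num) hvK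
  intro g hg
  exact (hG.2.2 F hface hvF hg).2

lemma oneparam {m : ℕ} {K : Set (ℝ × (Fin m → ℝ))}
    (hadd : ∀ {a b : ℝ × (Fin m → ℝ)}, a ∈ K → b ∈ K → a + b ∈ K)
    (hsmul : ∀ {c : ℝ} {a : ℝ × (Fin m → ℝ)}, 0 ≤ c → a ∈ K → c • a ∈ K)
    {v : ℝ × (Fin m → ℝ)} (hvK : v ∈ K) {G : Set (ℝ × (Fin m → ℝ))}
    (hGK : G ⊆ K) (hface : ∀ g ∈ G, ∃ ε > (0:ℝ), v - ε • g ∈ K)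
    {z : ℝ × (Fin m → ℝ)} (hz : z ∈ Submodule.span ℝ G) :
    ∃ ε > (0:ℝ), ∀ s : ℝ, |s| ≤ ε → v + s • z ∈ K := by
  induction hz using Submodule.span_induction with
  | mem g hg =>
    obtain ⟨ε, hε, hKε⟩ := hface g hg
    refine ⟨ε, hε, fun s hs => ?_⟩
    rcases le_or_gt 0 s with h | h
    · exact hadd hvK (hsmul h (hGK hg))
    · have hε' : (ε:ℝ) ≠ 0 := ne_of_gt hε
      set r : ℝ := -s / ε with hr
      have hr0 : 0 ≤ r := div_nonneg (by linarith) hε.le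
      have hr1 : r ≤ 1 := by
        rw [hr, div_le_one hε]
        linarith [(abs_le.mp hs).1]
      have hsr : s = -(r * ε) := by rw [hr]; field_simp
      rw [hsr]
      have key : v + (-(r * ε)) • g = (1 - r) • v + r • (v - ε • g) := by module
      rw [key]
      exact hadd (hsmul (by linarith) hvK) (hsmul hr0 hKε)
  | zero => exact ⟨1, one_pos, fun s _ => by simpa using hvK⟩
  | add z₁ z₂ h₁ h₂ ih₁ ih₂ =>
    obtain ⟨ε₁, hε₁, H₁⟩ := ih₁
    obtain ⟨ε₂, hε₂, H₂⟩ := ih₂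
    refine ⟨min ε₁ ε₂ / 2, by positivity, fun s hs => ?_⟩
    have key : v + s • (z₁ + z₂)
        = (1/2 : ℝ) • (v + (2*s) • z₁) + (1/2 : ℝ) • (v + (2*s) • z₂) := by module
    rw [key]
    have hb : |2*s| ≤ min ε₁ ε₂ := by
      rw [abs_mul, abs_two]; linarith
    refine hadd (hsmul (by norm_num) (H₁ _ (hb.trans (min_le_left _ _))))
      (hsmul (by norm_num) (H₂ _ (hb.trans (min_le_right _ _))))
  | smul a z hz ih =>
    obtain ⟨ε, hε, H⟩ := ih
    rcases eq_or_ne a 0 with rfl | ha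
    · exact ⟨1, one_pos, fun s _ => by simpa using hvK⟩
    · refine ⟨ε / |a|, by positivity, fun s hs => ?_⟩
      have key : v + s • (a • z) = v + (s * a) • z := by module
      rw [key]
      apply H
      rw [abs_mul]
      calc |s| * |a| ≤ (ε / |a|) * |a| :=
            mul_le_mul_of_nonneg_right hs (abs_nonneg a)
        _ = ε := by field_simp

lemma quadF_expand {ι : Type*} [Fintype ι] (M : Matrix ι ι ℝ) (bb : ι → ℝ) (cc : ℝ)
    (x y : ι → ℝ) (α : ℝ) :
    quadF M bb cc (x + α • y) = quadF M bb cc x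
      + α * (x ⬝ᵥ M.mulVec y + y ⬝ᵥ M.mulVec x + 2 * (bb ⬝ᵥ y))
      + α^2 * (y ⬝ᵥ M.mulVec y) := by
  simp [quadF, Matrix.mulVec_add, Matrix.mulVec_smul, dotProduct_add, add_dotProduct,
    dotProduct_smul, smul_dotProduct, smul_eq_mul]
  ring

/-- `R'(x,t) ⊆ R(x,t)`. -/
theorem stmt8 {n m : ℕ} (A0 : Matrix (Fin n) (Fin n) ℝ) (b0 : Fin n → ℝ) (c0 : ℝ)
    (A : Fin m → Matrix (Fin n) (Fin n) ℝ) (b : Fin m → Fin n → ℝ) (c : Fin m → ℝ)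
    (hA0 : A0.IsSymm) (hA : ∀ i, (A i).IsSymm)
    (hdef : ∃ g : Fin m → ℝ, (∀ i, 0 ≤ g i) ∧ (Amix A0 A 1 g).PosDef)
    (x : Fin n → ℝ) (t : ℝ) (hxt : (x, t) ∈ SSDP A0 b0 c0 A b c)
    (G : Set (ℝ × (Fin m → ℝ)))
    (hG : IsMinFace (polarCone (Gamma A0 A))
      (qVec A0 b0 c0 A b c x - (2 * t) • e0) G) :
    Rset' A0 b0 c0 A b c x t G ⊆ Rset (SSDP A0 b0 c0 A b c) (x, t) := by
  intro d hd
  set K := polarCone (Gamma A0 A) with hK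
  set v : ℝ × (Fin m → ℝ) := qVec A0 b0 c0 A b c x - (2 * t) • e0 with hv
  have hvK : v ∈ K := hxt
  set w : ℝ × (Fin m → ℝ) :=
    (x ⬝ᵥ A0.mulVec d.1 + d.1 ⬝ᵥ A0.mulVec x + 2 * (b0 ⬝ᵥ d.1) - 2 * d.2,
     fun i => x ⬝ᵥ (A i).mulVec d.1 + d.1 ⬝ᵥ (A i).mulVec x + 2 * (b i ⬝ᵥ d.1)) with hw
  set u : ℝ × (Fin m → ℝ) :=
    (d.1 ⬝ᵥ A0.mulVec d.1, fun i => d.1 ⬝ᵥ (A i).mulVec d.1) with hu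
  have hid : ∀ α : ℝ, qVec A0 b0 c0 A b c (x + α • d.1) - (2 * (t + α * d.2)) • e0
      = v + α • w + α ^ 2 • u := by
    intro α
    rw [Prod.ext_iff]
    constructor
    · show quadF A0 b0 c0 (x + α • d.1) - (2 * (t + α * d.2)) * (1:ℝ) = _
      rw [quadF_expand]
      show _ = (quadF A0 b0 c0 x - 2 * t * 1) + α * _ + α ^ 2 * _
      ring
    · funext i
      show quadF (A i) (b i) (c i) (x + α • d.1) - (2 * (t + α * d.2)) * (0:ℝ)
        = (quadF (A i) (b i) (c i) x - 2 * t * 0) + α * _ + α ^ 2 * _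
      rw [quadF_expand]
      ring
  have hwmem : w ∈ Submodule.span ℝ G := by
    have h1 := hd 1
    have h2 := hd (-1)
    rw [hid 1] at h1
    rw [hid (-1)] at h2
    have key : w = (1/2 : ℝ) • (v + (1:ℝ) • w + (1:ℝ)^2 • u)
        - (1/2 : ℝ) • (v + (-1:ℝ) • w + (-1:ℝ)^2 • u) := by module
    rw [key]
    exact Submodule.sub_mem _ (Submodule.smul_mem _ _ h1) (Submodule.smul_mem _ _ h2)
  have humem : u ∈ Submodule.span ℝ G := by
    have h1 := hd 1
    have h2 := hd (-1)
    have h0 := hd 0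
    rw [hid 1] at h1
    rw [hid (-1)] at h2
    rw [hid 0] at h0
    have key : u = (1/2 : ℝ) • (v + (1:ℝ) • w + (1:ℝ)^2 • u)
        + (1/2 : ℝ) • (v + (-1:ℝ) • w + (-1:ℝ)^2 • u)
        - (v + (0:ℝ) • w + (0:ℝ)^2 • u) := by module
    rw [key]
    exact Submodule.sub_mem _
      (Submodule.add_mem _ (Submodule.smul_mem _ _ h1) (Submodule.smul_mem _ _ h2)) h0
  have hadd : ∀ {a b : ℝ × (Fin m → ℝ)}, a ∈ K → b ∈ K → a + b ∈ K := fun ha hb =>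
    polar_add ha hb
  have hsmul : ∀ {c : ℝ} {a : ℝ × (Fin m → ℝ)}, 0 ≤ c → a ∈ K → c • a ∈ K :=
    fun hc ha => polar_smul hc ha
  have hGK : G ⊆ K := hG.1.1
  have hface := face_sub hadd hsmul hvK hG
  obtain ⟨εw, hεw, Hw⟩ := oneparam hadd hsmul hvK hGK hface hwmem
  obtain ⟨εu, hεu, Hu⟩ := oneparam hadd hsmul hvK hGK hface humem
  refine ⟨min 1 (min (εw / 2) (εu / 2)), by positivity, fun s hs => ?_⟩
  have habs : |s| ≤ min 1 (min (εw / 2) (εu / 2)) := abs_le.mpr ⟨hs.1, hs.2⟩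
  have h1 : |s| ≤ 1 := habs.trans (min_le_left _ _)
  have h2 : |s| ≤ εw / 2 := habs.trans ((min_le_right _ _).trans (min_le_left _ _))
  have h3 : |s| ≤ εu / 2 := habs.trans ((min_le_right _ _).trans (min_le_right _ _))
  have goal : qVec A0 b0 c0 A b c (x + s • d.1) - (2 * (t + s * d.2)) • e0 ∈ K := by
    rw [hid s]
    have split : v + s • w + s ^ 2 • u
        = (1/2 : ℝ) • (v + (2 * s) • w) + (1/2 : ℝ) • (v + (2 * s ^ 2) • u) := by
      module
    rw [split]
    have bw : |2 * s| ≤ εw := by rw [abs_mul, abs_two]; linarith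
    have hsq : s ^ 2 ≤ |s| := by nlinarith [sq_abs s, abs_nonneg s]
    have bu : |2 * s ^ 2| ≤ εu := by
      rw [abs_of_nonneg (by positivity)]; linarith
    exact hadd (hsmul (by norm_num) (Hw _ bw)) (hsmul (by norm_num) (Hu _ bu))
  exact goal
end
end

section
/- Suppose there exists γ* ∈ Γ₁ with A[γ*] ≻ 0 and Γ° is facially exposed (every face of Γ° is of the form Γ° ∩ w^⊥ for some w ∈ Γ). Then for every (x,t) ∈ S_SDP, R'(x,t) = R(x,t). -/
noncomputable section
open Matrix Set

/-! Along a direction `d`, the point `q(x + α d₁) - 2 (t + α d₂) e₀` traces the parabola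
`v + α U + α² W` with `v ∈ Γ°` and `-W ∈ Γ°`, since `W` pairs with `γ ∈ Γ` to `d₁ᵀ A(γ) d₁ ≥ 0`.
Every element of the minimal face `G` of `Γ°` at `v` is a two-sided direction of `Γ°` at `v`,
and these directions form a linear space; so if `U, W ∈ span G` the parabola stays in `Γ°` for
small `α`. Conversely, if `G = Γ° ∩ w^⊥` with `w ∈ Γ` and the parabola lies in `Γ°` at `α = ±ε`,
pairing with `w` forces `⟪U, w⟫ = ⟪W, w⟫ = 0`; then `-W` and `v + ε U + ε² W` lie in `G`, whence
`U, W ∈ span G`. -/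

section Rset

variable {E : Type*} [AddCommGroup E] [Module ℝ E] {C : Set E} {p u w : E}

lemma exists_add_smul_add_smul_mem (hC : Convex ℝ C) (hu : u ∈ Rset C p) (hw : w ∈ Rset C p) :
    ∃ δ : ℝ, 0 < δ ∧ ∀ a b : ℝ, |a| ≤ δ → |b| ≤ δ → p + a • u + b • w ∈ C := by
  obtain ⟨εu, hεu, hu⟩ := hu
  obtain ⟨εw, hεw, hw⟩ := hw
  refine ⟨min εu εw / 2, by positivity, fun a b ha hb => ?_⟩
  have h2a : 2 * a ∈ Icc (-εu) εu :=
    abs_le.1 (by rw [abs_mul, abs_two]; linarith [min_le_left εu εw])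
  have h2b : 2 * b ∈ Icc (-εw) εw :=
    abs_le.1 (by rw [abs_mul, abs_two]; linarith [min_le_right εu εw])
  convert hC (hu _ h2a) (hw _ h2b) (by norm_num : (0 : ℝ) ≤ 1 / 2) (by norm_num : (0 : ℝ) ≤ 1 / 2)
    (by norm_num) using 1
  module

lemma add_mem_Rset (hC : Convex ℝ C) (hu : u ∈ Rset C p) (hw : w ∈ Rset C p) :
    u + w ∈ Rset C p := by
  obtain ⟨δ, hδ, h⟩ := exists_add_smul_add_smul_mem hC hu hw
  refine ⟨δ, hδ, fun s hs => ?_⟩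
  rw [smul_add, ← add_assoc]
  exact h s s (abs_le.2 hs) (abs_le.2 hs)

lemma smul_mem_Rset (c : ℝ) (hu : u ∈ Rset C p) : c • u ∈ Rset C p := by
  obtain ⟨ε, hε, h⟩ := hu
  refine ⟨ε / (|c| + 1), by positivity, fun s hs => ?_⟩
  rw [smul_smul]
  refine h _ (abs_le.1 ?_)
  calc |s * c| = |s| * |c| := abs_mul s c
    _ ≤ ε / (|c| + 1) * (|c| + 1) := by
        gcongr
        · exact abs_le.2 hs
        · linarith
    _ = ε := by field_simp

def rsetSubmodule (hC : Convex ℝ C) (hp : p ∈ C) : Submodule ℝ E where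
  carrier := Rset C p
  zero_mem' := ⟨1, one_pos, fun s _ => by simpa using hp⟩
  add_mem' := add_mem_Rset hC
  smul_mem' c _ hu := smul_mem_Rset c hu

lemma span_subset_Rset {G : Set E} (hC : Convex ℝ C) (hp : p ∈ C) (hG : G ⊆ Rset C p) :
    (Submodule.span ℝ G : Set E) ⊆ Rset C p :=
  Submodule.span_le (p := rsetSubmodule hC hp) |>.2 hG

lemma exists_add_smul_add_sq_smul_mem (hC : Convex ℝ C) (hu : u ∈ Rset C p)
    (hw : w ∈ Rset C p) :
    ∃ ε : ℝ, 0 < ε ∧ ∀ s ∈ Icc (-ε) ε, p + s • u + s ^ 2 • w ∈ C := by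
  obtain ⟨δ, hδ, h⟩ := exists_add_smul_add_smul_mem hC hu hw
  refine ⟨min δ 1, lt_min hδ one_pos, fun s hs => h s (s ^ 2) ?_ ?_⟩
  · exact (abs_le.2 hs).trans (min_le_left δ 1)
  · have hs1 : |s| ≤ 1 := (abs_le.2 hs).trans (min_le_right δ 1)
    have hsδ : |s| ≤ δ := (abs_le.2 hs).trans (min_le_left δ 1)
    rw [abs_of_nonneg (sq_nonneg s), ← sq_abs]
    nlinarith [abs_nonneg s]

end Rset

lemma forall_add_smul_add_sq_smul_mem_iff {E : Type*} [AddCommGroup E] [Module ℝ E]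
    (S : Submodule ℝ E) {v u w : E} (hv : v ∈ S) :
    (∀ α : ℝ, v + α • u + α ^ 2 • w ∈ S) ↔ u ∈ S ∧ w ∈ S := by
  refine ⟨fun h => ?_, fun ⟨hu, hw⟩ α =>
    S.add_mem (S.add_mem hv (S.smul_mem α hu)) (S.smul_mem _ hw)⟩
  have hpos := h 1
  have hneg := h (-1)
  constructor
  · have hu : u = (1 / 2 : ℝ) • ((v + (1 : ℝ) • u + (1 : ℝ) ^ 2 • w)
        - (v + (-1 : ℝ) • u + (-1 : ℝ) ^ 2 • w)) := by module
    rw [hu]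
    exact S.smul_mem _ (S.sub_mem hpos hneg)
  · have hw : w = (1 / 2 : ℝ) • ((v + (1 : ℝ) • u + (1 : ℝ) ^ 2 • w)
        + (v + (-1 : ℝ) • u + (-1 : ℝ) ^ 2 • w)) - v := by module
    rw [hw]
    exact S.sub_mem (S.smul_mem _ (S.add_mem hpos hneg)) hv

section Face

variable {E : Type*} [AddCommGroup E] [Module ℝ E]

lemma mem_Rset_of_sub_smul_mem (K : PointedCone ℝ E) {v y : E} {δ : ℝ} (hδ : 0 < δ)
    (hv : v ∈ K) (hy : y ∈ K) (hvy : v - δ • y ∈ K) : y ∈ Rset K v := by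
  refine ⟨δ, hδ, fun s hs => ?_⟩
  rcases le_or_gt 0 s with hs0 | hs0
  · exact K.add_mem hv (K.smul_mem hs0 hy)
  · have h : v + s • y = (1 + s / δ) • v + (-s / δ) • (v - δ • y) := by
      match_scalars <;> field_simp
      ring
    have hsδ : -1 ≤ s / δ := by rw [le_div_iff₀ hδ]; linarith [hs.1]
    rw [h]
    exact K.add_mem (K.smul_mem (by linarith) hv) (K.smul_mem (div_nonneg (by linarith) hδ.le) hvy)

lemma isFaceOf_inter_Rset (K : PointedCone ℝ E) (v : E) :
    IsFaceOf (K : Set E) (K ∩ Rset K v) := by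
  refine ⟨inter_subset_left, fun y hy z hz hyz => ?_⟩
  obtain ⟨ε, hε, h⟩ := hyz.2
  have hv : v ∈ K := by simpa using h 0 ⟨by linarith, hε.le⟩
  have hvyz : v - ε • (y + z) ∈ K := by
    have h' := h (-ε) ⟨le_rfl, by linarith⟩
    rwa [neg_smul, ← sub_eq_add_neg] at h'
  have hvy : v - ε • y = v - ε • (y + z) + ε • z := by module
  have hvz : v - ε • z = v - ε • (y + z) + ε • y := by module
  exact ⟨⟨hy, mem_Rset_of_sub_smul_mem K hε hv hy (hvy ▸ K.add_mem hvyz (K.smul_mem hε.le hz))⟩,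
    ⟨hz, mem_Rset_of_sub_smul_mem K hε hv hz (hvz ▸ K.add_mem hvyz (K.smul_mem hε.le hy))⟩⟩

lemma IsMinFace.subset_Rset {K : PointedCone ℝ E} {v : E} {G : Set E}
    (hG : IsMinFace (K : Set E) v G) : G ⊆ Rset K v := by
  have hv : v ∈ K := hG.1.1 hG.2.1
  have hvF : v ∈ (K : Set E) ∩ Rset K v :=
    ⟨hv, mem_Rset_of_sub_smul_mem K one_pos hv hv (by simp)⟩
  exact (hG.2.2 _ (isFaceOf_inter_Rset K v) hvF).trans inter_subset_right

lemma mem_span_of_mem_exposed_face {K : Set E} (f : E →ₗ[ℝ] ℝ) (hf : ∀ x ∈ K, f x ≤ 0)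
    {v u w : E} {ε : ℝ} (hv : v ∈ K ∩ {x | f x = 0}) (hw : -w ∈ K) (hε : 0 < ε)
    (hpos : v + ε • u + ε ^ 2 • w ∈ K) (hneg : v + (-ε) • u + (-ε) ^ 2 • w ∈ K) :
    u ∈ Submodule.span ℝ (K ∩ {x | f x = 0}) ∧ w ∈ Submodule.span ℝ (K ∩ {x | f x = 0}) := by
  have hfv : f v = 0 := hv.2
  have hfw : 0 ≤ f w := by simpa using hf _ hw
  have hfpos := hf _ hpos
  have hfneg := hf _ hneg
  simp only [map_add, map_smul, smul_eq_mul, hfv, neg_sq] at hfpos hfneg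
  have hε2 : 0 < ε ^ 2 := by positivity
  have hfw0 : f w = 0 := le_antisymm (by nlinarith) hfw
  have hfu0 : f u = 0 := by nlinarith
  have hwG : -w ∈ K ∩ {x | f x = 0} := ⟨hw, by simp [hfw0]⟩
  have hposG : v + ε • u + ε ^ 2 • w ∈ K ∩ {x | f x = 0} := ⟨hpos, by simp [hfv, hfu0, hfw0]⟩
  have hwS : w ∈ Submodule.span ℝ (K ∩ {x | f x = 0}) := by
    simpa using Submodule.neg_mem _ (Submodule.subset_span hwG)
  refine ⟨?_, hwS⟩
  have hu : u = ε⁻¹ • ((v + ε • u + ε ^ 2 • w) - v - ε ^ 2 • w) := by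
    rw [eq_inv_smul_iff₀ hε.ne']
    module
  rw [hu]
  exact Submodule.smul_mem _ _ (Submodule.sub_mem _ (Submodule.sub_mem _
    (Submodule.subset_span hposG) (Submodule.subset_span hv)) (Submodule.smul_mem _ _ hwS))

end Face

def iprLeft {m : ℕ} (w : ℝ × (Fin m → ℝ)) : (ℝ × (Fin m → ℝ)) →ₗ[ℝ] ℝ where
  toFun v := ipr v w
  map_add' u v := by simp only [ipr, Prod.fst_add, Prod.snd_add, add_dotProduct]; ring
  map_smul' c v := by
    simp only [ipr, Prod.smul_fst, Prod.smul_snd, smul_dotProduct, smul_eq_mul, RingHom.id_apply]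
    ring

def polarPointedCone {m : ℕ} (S : Set (ℝ × (Fin m → ℝ))) : PointedCone ℝ (ℝ × (Fin m → ℝ)) where
  carrier := polarCone S
  add_mem' {u v} hu hv w hw := by
    change iprLeft w (u + v) ≤ 0
    rw [map_add]
    exact add_nonpos (hu w hw) (hv w hw)
  zero_mem' w _ := by
    change iprLeft w 0 ≤ 0
    rw [map_zero]
  smul_mem' c v hv w hw := by
    change iprLeft w ((c : ℝ) • v) ≤ 0
    rw [map_smul, smul_eq_mul]
    exact mul_nonpos_of_nonneg_of_nonpos c.2 (hv w hw)

section Quadratic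

variable {ι : Type*} [Fintype ι] {m : ℕ}

lemma quadF_add_smul {M : Matrix ι ι ℝ} (hM : M.IsSymm) (b : ι → ℝ) (c : ℝ) (x y : ι → ℝ)
    (α : ℝ) : quadF M b c (x + α • y)
      = quadF M b c x + α * (2 * ((M *ᵥ x + b) ⬝ᵥ y)) + α ^ 2 * (y ⬝ᵥ M *ᵥ y) := by
  have hsym : y ⬝ᵥ M *ᵥ x = x ⬝ᵥ M *ᵥ y := by
    rw [dotProduct_mulVec, ← mulVec_transpose, hM.eq, dotProduct_comm]
  simp only [quadF, mulVec_add, mulVec_smul, dotProduct_add, add_dotProduct, dotProduct_smul,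
    smul_dotProduct, smul_eq_mul, hsym]
  rw [dotProduct_comm (M *ᵥ x), ← hsym]
  ring

def qVecLin (A0 : Matrix ι ι ℝ) (b0 : ι → ℝ) (A : Fin m → Matrix ι ι ℝ) (b : Fin m → ι → ℝ)
    (x : ι → ℝ) (d : (ι → ℝ) × ℝ) : ℝ × (Fin m → ℝ) :=
  (2 * ((A0 *ᵥ x + b0) ⬝ᵥ d.1) - 2 * d.2, fun i => 2 * ((A i *ᵥ x + b i) ⬝ᵥ d.1))

def qVecQuad (A0 : Matrix ι ι ℝ) (A : Fin m → Matrix ι ι ℝ) (y : ι → ℝ) : ℝ × (Fin m → ℝ) :=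
  (y ⬝ᵥ A0 *ᵥ y, fun i => y ⬝ᵥ A i *ᵥ y)

lemma qVec_add_smul_sub_smul_e0 {A0 : Matrix ι ι ℝ} (b0 : ι → ℝ) (c0 : ℝ)
    {A : Fin m → Matrix ι ι ℝ} (b : Fin m → ι → ℝ) (c : Fin m → ℝ) (hA0 : A0.IsSymm)
    (hA : ∀ i, (A i).IsSymm) (x : ι → ℝ) (t : ℝ) (d : (ι → ℝ) × ℝ) (α : ℝ) :
    qVec A0 b0 c0 A b c (x + α • d.1) - (2 * (t + α * d.2)) • e0
      = qVec A0 b0 c0 A b c x - (2 * t) • e0 + α • qVecLin A0 b0 A b x d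
        + α ^ 2 • qVecQuad A0 A d.1 := by
  refine Prod.ext ?_ (funext fun i => ?_)
  · simp only [qVec, qVecLin, qVecQuad, e0, Prod.fst_sub, Prod.fst_add, Prod.smul_fst,
      smul_eq_mul, quadF_add_smul hA0]
    ring
  · simp only [qVec, qVecLin, qVecQuad, e0, Prod.snd_sub, Prod.snd_add, Prod.smul_snd,
      Pi.sub_apply, Pi.add_apply, Pi.smul_apply, Pi.zero_apply, smul_eq_mul, quadF_add_smul (hA i)]
    ring

lemma ipr_qVecQuad (A0 : Matrix ι ι ℝ) (A : Fin m → Matrix ι ι ℝ) (y : ι → ℝ)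
    (γ : ℝ × (Fin m → ℝ)) : ipr (qVecQuad A0 A y) γ = y ⬝ᵥ Amix A0 A γ.1 γ.2 *ᵥ y := by
  simp only [ipr, qVecQuad, Amix, add_mulVec, sum_mulVec, smul_mulVec, dotProduct_add,
    dotProduct_sum, dotProduct_smul, smul_eq_mul]
  rw [mul_comm, dotProduct_comm _ γ.2]
  rfl

lemma neg_qVecQuad_mem_polarCone (A0 : Matrix ι ι ℝ) (A : Fin m → Matrix ι ι ℝ) (y : ι → ℝ) :
    -qVecQuad A0 A y ∈ polarCone (Gamma A0 A) := fun γ hγ => by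
  change iprLeft γ (-qVecQuad A0 A y) ≤ 0
  rw [map_neg, neg_nonpos]
  simpa [iprLeft, ipr_qVecQuad] using hγ.2.2.dotProduct_mulVec_nonneg y

end Quadratic

theorem stmt10_general {n m : ℕ} (A0 : Matrix (Fin n) (Fin n) ℝ) (b0 : Fin n → ℝ) (c0 : ℝ)
    (A : Fin m → Matrix (Fin n) (Fin n) ℝ) (b : Fin m → Fin n → ℝ) (c : Fin m → ℝ)
    (hA0 : A0.IsSymm) (hA : ∀ i, (A i).IsSymm)
    (hexp : ∀ G : Set (ℝ × (Fin m → ℝ)), IsFaceOf (polarCone (Gamma A0 A)) G →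
      ∃ w ∈ Gamma A0 A, G = polarCone (Gamma A0 A) ∩ {v | ipr v w = 0}) :
    ∀ p ∈ SSDP A0 b0 c0 A b c, ∀ G : Set (ℝ × (Fin m → ℝ)),
      IsMinFace (polarCone (Gamma A0 A))
        (qVec A0 b0 c0 A b c p.1 - (2 * p.2) • e0) G →
      Rset' A0 b0 c0 A b c p.1 p.2 G = Rset (SSDP A0 b0 c0 A b c) p := by
  intro p hp G hG
  ext d
  set v := qVec A0 b0 c0 A b c p.1 - (2 * p.2) • e0
  set U := qVecLin A0 b0 A b p.1 d
  set W := qVecQuad A0 A d.1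
  have hcurve (α : ℝ) : qVec A0 b0 c0 A b c (p.1 + α • d.1) - (2 * (p.2 + α * d.2)) • e0
      = v + α • U + α ^ 2 • W := qVec_add_smul_sub_smul_e0 b0 c0 b c hA0 hA p.1 p.2 d α
  have hR' : d ∈ Rset' A0 b0 c0 A b c p.1 p.2 G ↔
      U ∈ Submodule.span ℝ G ∧ W ∈ Submodule.span ℝ G := by
    simp only [Rset', mem_ofPred_eq, hcurve]
    exact forall_add_smul_add_sq_smul_mem_iff _ (Submodule.subset_span hG.2.1)
  have hR : d ∈ Rset (SSDP A0 b0 c0 A b c) p ↔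
      ∃ ε : ℝ, 0 < ε ∧ ∀ s ∈ Icc (-ε) ε, v + s • U + s ^ 2 • W ∈ polarCone (Gamma A0 A) := by
    simp only [Rset, SSDP, mem_ofPred_eq, Prod.fst_add, Prod.snd_add, Prod.smul_fst,
      Prod.smul_snd, smul_eq_mul, hcurve]
  rw [hR', hR]
  constructor
  · rintro ⟨hU, hW⟩
    have hconv := (polarPointedCone (Gamma A0 A)).convex
    have hspan := span_subset_Rset hconv hp
      (IsMinFace.subset_Rset (K := polarPointedCone (Gamma A0 A)) hG)
    exact exists_add_smul_add_sq_smul_mem hconv (hspan hU) (hspan hW)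
  · rintro ⟨ε, hε, h⟩
    obtain ⟨w, hw, rfl⟩ := hexp G hG.1
    exact mem_span_of_mem_exposed_face (K := polarCone (Gamma A0 A)) (iprLeft w)
      (fun x hx => hx w hw) hG.2.1 (neg_qVecQuad_mem_polarCone A0 A d.1) hε
      (h ε ⟨by linarith, le_rfl⟩) (h (-ε) ⟨le_rfl, by linarith⟩)

/-- under facial exposedness of `Γ°`, `R'(x,t) = R(x,t)`. -/
theorem stmt10 {n m : ℕ} (A0 : Matrix (Fin n) (Fin n) ℝ) (b0 : Fin n → ℝ) (c0 : ℝ)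
    (A : Fin m → Matrix (Fin n) (Fin n) ℝ) (b : Fin m → Fin n → ℝ) (c : Fin m → ℝ)
    (hA0 : A0.IsSymm) (hA : ∀ i, (A i).IsSymm)
    (hdef : ∃ g ∈ Gamma1 A0 A, (Amix A0 A 1 g).PosDef)
    (hexp : ∀ G : Set (ℝ × (Fin m → ℝ)), IsFaceOf (polarCone (Gamma A0 A)) G →
      ∃ w ∈ Gamma A0 A, G = polarCone (Gamma A0 A) ∩ {v | ipr v w = 0}) :
    ∀ p ∈ SSDP A0 b0 c0 A b c, ∀ G : Set (ℝ × (Fin m → ℝ)),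
      IsMinFace (polarCone (Gamma A0 A))
        (qVec A0 b0 c0 A b c p.1 - (2 * p.2) • e0) G →
      Rset' A0 b0 c0 A b c p.1 p.2 G = Rset (SSDP A0 b0 c0 A b c) p :=
  stmt10_general A0 b0 c0 A b c hA0 hA hexp
end
end

section
/- Suppose there exists γ* ∈ Γ₁ with A[γ*] ≻ 0, and let (x,t) ∈ S_SDP satisfy 2t = sup_{γ∈Γ₁} [γ, q(x)]. Then span(G(x,t)) does not contain the line ℝ × {0_m} ⊆ ℝ^{1+m}; equivalently, G(x,t)^⊥ is spanned by its intersection with the affine slice {(γ₀,γ) : γ₀ = 1}. -/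
noncomputable section
open Matrix Set

/-! Put `v = q(x) - 2t e₀`. The minimal face `G` of the convex cone `Γ°` at `v` lies in the face
`{w ∈ Γ° : v - w ∈ Γ°}`, so `|⟪w, p⟫| ≤ -⟪v, p⟫` for `w ∈ G` and `p ∈ Γ`, and the same holds up to a
constant factor on `span G`. At `p = (1, γ)` with `γ ∈ Γ₁` the bound `-⟪v, p⟫ = 2t - [γ, q(x)]` gets
arbitrarily small because `2t` is the supremum, whereas `⟪(1, 0), (1, γ)⟫ = 1`; hence
`(1, 0) ∉ span G`. Since `ipr` is nondegenerate, `span G = G^⊥⊥`, so some `u ⊥ G` has `u.1 ≠ 0`, and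
translating by multiples of `u / u.1` moves any vector of `G^⊥` into the slice `γ₀ = 1`. -/

open LinearMap (BilinForm)

theorem Submodule.span_inter_setOf_eq_one {R V : Type*} [Ring R] [AddCommGroup V] [Module R V]
    (W : Submodule R V) (ℓ : V →ₗ[R] R) {u₀ : V} (hu₀ : u₀ ∈ W) (hℓ : ℓ u₀ = 1) :
    span R ((W : Set V) ∩ {p | ℓ p = 1}) = W := by
  refine le_antisymm (span_le.2 inter_subset_left) fun u hu => ?_
  have hslice : u + (1 - ℓ u) • u₀ ∈ (W : Set V) ∩ {p | ℓ p = 1} :=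
    ⟨W.add_mem hu (W.smul_mem _ hu₀), by simp [hℓ]⟩
  have hdecomp : u = (u + (1 - ℓ u) • u₀) + (ℓ u - 1) • u₀ := by
    rw [add_assoc, ← add_smul]; simp
  rw [hdecomp]
  exact add_mem (subset_span hslice) (smul_mem _ _ (subset_span ⟨hu₀, hℓ⟩))

theorem exists_abs_le_mul_of_mem_span {𝕜 E F : Type*} [Field 𝕜] [LinearOrder 𝕜]
    [IsStrictOrderedRing 𝕜] [AddCommGroup E] [Module 𝕜 E] [AddCommGroup F] [Module 𝕜 F]
    (B : E →ₗ[𝕜] F →ₗ[𝕜] 𝕜) {S : Set E} {P : Set F} {f : F → 𝕜}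
    (hS : ∀ w ∈ S, ∀ p ∈ P, |B w p| ≤ f p) {u : E} (hu : u ∈ Submodule.span 𝕜 S) :
    ∃ C, ∀ p ∈ P, |B u p| ≤ C * f p := by
  induction hu using Submodule.span_induction with
  | mem w hw => exact ⟨1, fun p hp => by simpa using hS w hw p hp⟩
  | zero => exact ⟨0, fun p _ => by simp⟩
  | add y z _ _ hy hz =>
    obtain ⟨C₁, h₁⟩ := hy
    obtain ⟨C₂, h₂⟩ := hz
    refine ⟨C₁ + C₂, fun p hp => ?_⟩
    calc |B (y + z) p| ≤ |B y p| + |B z p| := by simpa using abs_add_le (B y p) (B z p)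
      _ ≤ C₁ * f p + C₂ * f p := add_le_add (h₁ p hp) (h₂ p hp)
      _ = (C₁ + C₂) * f p := by ring
  | smul r y _ hy =>
    obtain ⟨C, h⟩ := hy
    refine ⟨|r| * C, fun p hp => ?_⟩
    rw [map_smul, LinearMap.smul_apply, smul_eq_mul, abs_mul, mul_assoc]
    exact mul_le_mul_of_nonneg_left (h p hp) (abs_nonneg r)

theorem IsLUB.exists_mul_sub_lt_one {s : Set ℝ} {a : ℝ} (h : IsLUB s a) (C : ℝ) :
    ∃ b ∈ s, C * (a - b) < 1 := by
  obtain ⟨b, hb, hab, hba⟩ := h.exists_between_sub_self (ε := 1 / (|C| + 1)) (by positivity)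
  refine ⟨b, hb, ?_⟩
  have hε : |C| * (1 / (|C| + 1)) < 1 := by
    rw [mul_one_div, div_lt_one (by positivity)]; linarith
  calc C * (a - b) ≤ |C| * (a - b) := mul_le_mul_of_nonneg_right (le_abs_self C) (by linarith)
    _ ≤ |C| * (1 / (|C| + 1)) := mul_le_mul_of_nonneg_left (by linarith) (abs_nonneg C)
    _ < 1 := hε

section Face

variable {E : Type*} [AddCommGroup E] {K : Set E}

theorem isFaceOf_setOf_sub_mem (hK : ∀ a ∈ K, ∀ b ∈ K, a + b ∈ K) (v : E) :
    IsFaceOf K {w | w ∈ K ∧ v - w ∈ K} := by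
  refine ⟨fun w hw => hw.1, fun y hy z hz hyz => ⟨⟨hy, ?_⟩, ⟨hz, ?_⟩⟩⟩
  · simpa [sub_add_cancel_right, sub_add_eq_sub_sub] using hK _ hyz.2 _ hz
  · simpa [sub_add_eq_sub_sub_swap] using hK _ hyz.2 _ hy

theorem IsMinFace.subset_setOf_sub_mem {v : E} {G : Set E} (hG : IsMinFace K v G)
    (hK : ∀ a ∈ K, ∀ b ∈ K, a + b ∈ K) (h0 : (0 : E) ∈ K) :
    G ⊆ {w | w ∈ K ∧ v - w ∈ K} :=
  hG.2.2 _ (isFaceOf_setOf_sub_mem hK v) ⟨hG.1.1 hG.2.1, by rwa [sub_self]⟩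

end Face

section InnerProduct

def iprBilin (m : ℕ) : BilinForm ℝ (ℝ × (Fin m → ℝ)) :=
  LinearMap.mk₂ ℝ ipr
    (fun u v w => by simp only [ipr, Prod.fst_add, Prod.snd_add, add_dotProduct]; ring)
    (fun r v w => by
      simp only [ipr, Prod.smul_fst, Prod.smul_snd, smul_dotProduct, smul_eq_mul]; ring)
    (fun u v w => by simp only [ipr, Prod.fst_add, Prod.snd_add, dotProduct_add]; ring)
    (fun r v w => by
      simp only [ipr, Prod.smul_fst, Prod.smul_snd, dotProduct_smul, smul_eq_mul]; ring)

variable {m : ℕ}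

theorem ipr_comm (v w : ℝ × (Fin m → ℝ)) : ipr v w = ipr w v := by
  simp only [ipr, mul_comm, dotProduct_comm]

@[simp]
theorem iprBilin_apply (v w : ℝ × (Fin m → ℝ)) : iprBilin m v w = ipr v w := rfl

theorem iprBilin_isRefl : (iprBilin m).IsRefl := fun v w h => by
  rwa [iprBilin_apply, ipr_comm] at h

theorem eq_zero_of_ipr_self_eq_zero {v : ℝ × (Fin m → ℝ)} (h : ipr v v = 0) : v = 0 := by
  have hsq : 0 ≤ v.2 ⬝ᵥ v.2 := dotProduct_self_star_nonneg v.2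
  unfold ipr at h
  have h₁ : v.1 = 0 := by nlinarith
  have h₂ : v.2 = 0 := dotProduct_self_eq_zero.1 (by nlinarith)
  exact Prod.ext h₁ h₂

theorem iprBilin_nondegenerate : (iprBilin m).Nondegenerate :=
  ⟨fun v hv => eq_zero_of_ipr_self_eq_zero (hv v),
    fun v hv => eq_zero_of_ipr_self_eq_zero (hv v)⟩

theorem orthC_eq_orthogonal (G : Set (ℝ × (Fin m → ℝ))) :
    orthC G = (iprBilin m).orthogonal (Submodule.span ℝ G) := by
  ext v
  refine ⟨fun h n hn => ?_, fun h w hw => ?_⟩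
  · have hker : Submodule.span ℝ G ≤ LinearMap.ker ((iprBilin m).flip v) :=
      Submodule.span_le.2 fun w hw => by simp [ipr_comm w, h w hw]
    exact hker hn
  · rw [ipr_comm]
    exact h w (Submodule.subset_span hw)

theorem exists_mem_orthC_fst_eq_one {G : Set (ℝ × (Fin m → ℝ))}
    (hG : ((1 : ℝ), (0 : Fin m → ℝ)) ∉ Submodule.span ℝ G) : ∃ u ∈ orthC G, u.1 = 1 := by
  rw [← (iprBilin m).orthogonal_orthogonal iprBilin_nondegenerate iprBilin_isRefl
    (Submodule.span ℝ G)] at hG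
  simp only [BilinForm.mem_orthogonal_iff, not_forall] at hG
  obtain ⟨u, hu, hu₁⟩ := hG
  have hu₁ : u.1 ≠ 0 := by simpa [ipr] using hu₁
  refine ⟨u.1⁻¹ • u, ?_, by simp [hu₁]⟩
  rw [orthC_eq_orthogonal]
  exact Submodule.smul_mem _ _ hu

theorem zero_mem_polarCone (S : Set (ℝ × (Fin m → ℝ))) : 0 ∈ polarCone S := fun w _ => by
  simp [ipr]

theorem add_mem_polarCone {S : Set (ℝ × (Fin m → ℝ))} {v w : ℝ × (Fin m → ℝ)}
    (hv : v ∈ polarCone S) (hw : w ∈ polarCone S) : v + w ∈ polarCone S := fun p hp => by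
  simpa only [← iprBilin_apply, map_add, LinearMap.add_apply] using add_nonpos (hv p hp) (hw p hp)

theorem abs_ipr_le_of_isMinFace {S G : Set (ℝ × (Fin m → ℝ))} {v w p : ℝ × (Fin m → ℝ)}
    (hG : IsMinFace (polarCone S) v G) (hw : w ∈ G) (hp : p ∈ S) : |ipr w p| ≤ -ipr v p := by
  obtain ⟨hwK, hvwK⟩ :=
    hG.subset_setOf_sub_mem (fun _ ha _ hb => add_mem_polarCone ha hb) (zero_mem_polarCone S) hw
  have hsub : ipr (v - w) p = ipr v p - ipr w p := by
    simp only [← iprBilin_apply, map_sub, LinearMap.sub_apply]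
  have h₁ := hwK p hp
  have h₂ := hvwK p hp
  rw [abs_le]
  constructor <;> linarith

end InnerProduct

section QCQP

variable {ι : Type*} [Fintype ι] {m : ℕ} {A0 : Matrix ι ι ℝ} {b0 : ι → ℝ} {c0 : ℝ}
  {A : Fin m → Matrix ι ι ℝ} {b : Fin m → ι → ℝ} {c : Fin m → ℝ}

theorem mk_one_mem_Gamma {g : Fin m → ℝ} (hg : g ∈ Gamma1 A0 A) : ((1 : ℝ), g) ∈ Gamma A0 A :=
  ⟨zero_le_one, hg.1, hg.2⟩

theorem ipr_qVec_sub_smul_e0 (x : ι → ℝ) (t : ℝ) (g : Fin m → ℝ) :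
    ipr (qVec A0 b0 c0 A b c x - (2 * t) • e0) ((1 : ℝ), g) = brkt A0 b0 c0 A b c g x - 2 * t := by
  simp only [ipr, qVec, e0, brkt, Prod.fst_sub, Prod.snd_sub, Prod.smul_mk, smul_eq_mul, mul_one,
    smul_zero, sub_zero, dotProduct, mul_comm (quadF (A _) _ _ x)]
  ring

theorem one_zero_notMem_span_of_isMinFace {x : ι → ℝ} {t : ℝ} {G : Set (ℝ × (Fin m → ℝ))}
    (hsup : IsLUB ((fun g => brkt A0 b0 c0 A b c g x) '' Gamma1 A0 A) (2 * t))
    (hG : IsMinFace (polarCone (Gamma A0 A)) (qVec A0 b0 c0 A b c x - (2 * t) • e0) G) :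
    ((1 : ℝ), (0 : Fin m → ℝ)) ∉ Submodule.span ℝ G := by
  intro hmem
  obtain ⟨C, hC⟩ := exists_abs_le_mul_of_mem_span (iprBilin m)
    (fun w hw p hp => abs_ipr_le_of_isMinFace hG hw hp) hmem
  obtain ⟨_, ⟨g, hg, rfl⟩, hlt⟩ := hsup.exists_mul_sub_lt_one C
  have hbound := hC _ (mk_one_mem_Gamma hg)
  simp only [iprBilin_apply, ipr_qVec_sub_smul_e0] at hbound
  simp only [ipr, mul_one, zero_dotProduct, add_zero, abs_one] at hbound
  linarith

end QCQP

theorem stmt12_general {n m : ℕ} (A0 : Matrix (Fin n) (Fin n) ℝ) (b0 : Fin n → ℝ) (c0 : ℝ)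
    (A : Fin m → Matrix (Fin n) (Fin n) ℝ) (b : Fin m → Fin n → ℝ) (c : Fin m → ℝ)
    (x : Fin n → ℝ) (t : ℝ)
    (hsup : IsLUB ((fun g => brkt A0 b0 c0 A b c g x) '' Gamma1 A0 A) (2 * t))
    (G : Set (ℝ × (Fin m → ℝ)))
    (hG : IsMinFace (polarCone (Gamma A0 A))
      (qVec A0 b0 c0 A b c x - (2 * t) • e0) G) :
    ((1 : ℝ), (0 : Fin m → ℝ)) ∉ Submodule.span ℝ G ∧
    orthC G =
      ↑(Submodule.span ℝ (orthC G ∩ {p : ℝ × (Fin m → ℝ) | p.1 = 1})) := by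
  have hline := one_zero_notMem_span_of_isMinFace hsup hG
  obtain ⟨u₀, hu₀, hu₀₁⟩ := exists_mem_orthC_fst_eq_one hline
  rw [orthC_eq_orthogonal] at hu₀ ⊢
  exact ⟨hline, congrArg SetLike.coe
    (((iprBilin m).orthogonal _).span_inter_setOf_eq_one (LinearMap.fst ℝ ℝ _) hu₀ hu₀₁).symm⟩

/-- if `2t = sup_{γ ∈ Γ₁} [γ, q(x)]`, then `span(G(x,t))` does not
contain the line `ℝ × {0}`, and `G(x,t)^⊥` is spanned by its slice at `γ₀ = 1`. -/
theorem stmt12 {n m : ℕ} (A0 : Matrix (Fin n) (Fin n) ℝ) (b0 : Fin n → ℝ) (c0 : ℝ)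
    (A : Fin m → Matrix (Fin n) (Fin n) ℝ) (b : Fin m → Fin n → ℝ) (c : Fin m → ℝ)
    (hA0 : A0.IsSymm) (hA : ∀ i, (A i).IsSymm)
    (hdef : ∃ g ∈ Gamma1 A0 A, (Amix A0 A 1 g).PosDef)
    (x : Fin n → ℝ) (t : ℝ) (hxt : (x, t) ∈ SSDP A0 b0 c0 A b c)
    (hsup : IsLUB ((fun g => brkt A0 b0 c0 A b c g x) '' Gamma1 A0 A) (2 * t))
    (G : Set (ℝ × (Fin m → ℝ)))
    (hG : IsMinFace (polarCone (Gamma A0 A))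
      (qVec A0 b0 c0 A b c x - (2 * t) • e0) G) :
    ((1 : ℝ), (0 : Fin m → ℝ)) ∉ Submodule.span ℝ G ∧
    orthC G =
      ↑(Submodule.span ℝ (orthC G ∩ {p : ℝ × (Fin m → ℝ) | p.1 = 1})) :=
  stmt12_general A0 b0 c0 A b c x t hsup G hG
end
end
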